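/- Let a₁, a₂ ∈ ℝ, α₁, α₂ > 0, and let κ₁, κ₂ ∈ ℝ be arbitrary. Set η = α₂/2, let N > 4|a₂|/α₂, let γ ∈ (0,1) and C₅ > 0. Define φ₅(x,y) = C₅(ηx² + y²)^γ on U₅ = {(x,y) : x > N/2}. Then φ₅ is a Lyapunov function for L on U₅; in particular there exist C₅′, D₅ > 0 with (Lφ₅)(x,y) ≤ −C₅′·φ₅(x,y) + D₅ for all (x,y) ∈ U₅. -/

import Mathlib

noncomputable def Lop (a₁ a₂ α₁ α₂ κ₁ κ₂ : ℝ) (Φ : ℝ × ℝ → ℝ) (p : ℝ × ℝ) : ℝ :=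
  (a₁ * p.1 - α₁ * p.1 ^ 2 + p.2 ^ 2) * deriv (fun t => Φ (t, p.2)) p.1
    + (a₂ * p.2 - α₂ * p.1 * p.2) * deriv (fun t => Φ (p.1, t)) p.2
    + κ₁ * deriv (deriv (fun t => Φ (t, p.2))) p.1
    + κ₂ * deriv (deriv (fun t => Φ (p.1, t))) p.2

/-- `φ` is a Lyapunov function for the operator `L` (with the given parameters) on `U`:
(I) `φ` is `C^∞` on `U`; (II) `φ z → ∞` as `|z| → ∞`, `z ∈ U`;
(III) there are `C, D > 0` with `Lφ ≤ -C•φ + D` on `U`. -/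
def IsLyapunovOn (a₁ a₂ α₁ α₂ κ₁ κ₂ : ℝ) (φ : ℝ × ℝ → ℝ) (U : Set (ℝ × ℝ)) : Prop :=
  ContDiffOn ℝ (⊤ : ℕ∞) φ U ∧
    (∀ M : ℝ, ∃ R : ℝ, ∀ z ∈ U, R < ‖z‖ → M < φ z) ∧
    (∃ C > (0:ℝ), ∃ D > (0:ℝ), ∀ z ∈ U, Lop a₁ a₂ α₁ α₂ κ₁ κ₂ φ z ≤ -C * φ z + D)
noncomputable def phi5 (C₅ η γ : ℝ) (p : ℝ × ℝ) : ℝ :=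
  C₅ * (η * p.1 ^ 2 + p.2 ^ 2) ^ γ

def U5 (N : ℝ) : Set (ℝ × ℝ) := {p : ℝ × ℝ | N / 2 < p.1}

/-!
Write `r = η x² + y²`. A direct computation gives `L φ₅ = C₅ γ r^(γ-1) B` with
`B = 2ηx (a₁x - α₁x² + y²) + 2y (a₂y - α₂xy) + 2ηκ₁ + 2κ₂ + 4(γ-1)(κ₁η²x² + κ₂y²) / r`.
The choice `α₂ = 2η` turns the cross terms into `-2ηxy²`, which beats `2a₂y²` once `x > N/2`;
the cubic `-2ηα₁x³` beats every `x²` term; and the second order part is bounded since `0 < γ < 1`.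
Hence `B ≤ -c r + K` with `c = ηN - 2|a₂| > 0`, and as `φ₅ = C₅ r^(γ-1) r` and
`r^(γ-1) ≤ (ηN²/4)^(γ-1)` on `U₅`, this gives `L φ₅ ≤ -cγ φ₅ + D`.
-/

open Real Filter

lemma hasDerivAt_quadratic (p q t : ℝ) :
    HasDerivAt (fun s => p * s ^ 2 + q) (2 * p * t) t :=
  (((hasDerivAt_pow 2 t).const_mul p).add_const q).congr_deriv (by push_cast; ring)

lemma hasDerivAt_const_mul_rpow_quadratic (C p q γ t : ℝ) (h : p * t ^ 2 + q ≠ 0) :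
    HasDerivAt (fun s => C * (p * s ^ 2 + q) ^ γ)
      (C * γ * (p * t ^ 2 + q) ^ (γ - 1) * (2 * p * t)) t :=
  (((hasDerivAt_quadratic p q t).rpow_const (Or.inl h)).const_mul C).congr_deriv (by ring)

lemma deriv_deriv_const_mul_rpow_quadratic (C p q γ t : ℝ) (h : p * t ^ 2 + q ≠ 0) :
    deriv (deriv fun s => C * (p * s ^ 2 + q) ^ γ) t
      = C * γ * (p * t ^ 2 + q) ^ (γ - 1)
          * (2 * p + 4 * p ^ 2 * t ^ 2 * (γ - 1) / (p * t ^ 2 + q)) := by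
  have hne : ∀ᶠ s in nhds t, p * s ^ 2 + q ≠ 0 :=
    (show Continuous fun s : ℝ => p * s ^ 2 + q by fun_prop).continuousAt.eventually_ne h
  have hderiv : deriv (fun s => C * (p * s ^ 2 + q) ^ γ) =ᶠ[nhds t]
      fun s => C * γ * (p * s ^ 2 + q) ^ (γ - 1) * (2 * p * s) :=
    hne.mono fun s hs => (hasDerivAt_const_mul_rpow_quadratic C p q γ s hs).deriv
  have h2 := ((((hasDerivAt_quadratic p q t).rpow_const (p := γ - 1) (Or.inl h)).const_mul
    (C * γ)).fun_mul ((hasDerivAt_id' t).const_mul (2 * p)))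
  rw [hderiv.deriv_eq, h2.deriv, rpow_sub_one h (γ - 1)]
  field_simp
  ring

lemma Lop_phi5 (a₁ a₂ α₁ α₂ κ₁ κ₂ C η γ x y : ℝ) (h : η * x ^ 2 + y ^ 2 ≠ 0) :
    Lop a₁ a₂ α₁ α₂ κ₁ κ₂ (phi5 C η γ) (x, y)
      = C * γ * (η * x ^ 2 + y ^ 2) ^ (γ - 1) *
        (2 * η * x * (a₁ * x - α₁ * x ^ 2 + y ^ 2) + 2 * y * (a₂ * y - α₂ * x * y)
          + 2 * η * κ₁ + 2 * κ₂
          + 4 * (γ - 1) * (κ₁ * η ^ 2 * x ^ 2 + κ₂ * y ^ 2) / (η * x ^ 2 + y ^ 2)) := by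
  have h' : 1 * y ^ 2 + η * x ^ 2 ≠ 0 := by rwa [one_mul, add_comm]
  have hslice : (fun t => phi5 C η γ (x, t)) = fun t => C * (1 * t ^ 2 + η * x ^ 2) ^ γ := by
    funext t; simp only [phi5]; ring_nf
  simp only [Lop, hslice]
  simp only [phi5]
  rw [(hasDerivAt_const_mul_rpow_quadratic C η (y ^ 2) γ x h).deriv,
    (hasDerivAt_const_mul_rpow_quadratic C 1 (η * x ^ 2) γ y h').deriv,
    deriv_deriv_const_mul_rpow_quadratic C η (y ^ 2) γ x h,
    deriv_deriv_const_mul_rpow_quadratic C 1 (η * x ^ 2) γ y h',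
    one_mul, add_comm (y ^ 2)]
  ring

lemma sq_mul_sub_le (A α x : ℝ) (hα : 0 < α) (hx : 0 ≤ x) :
    x ^ 2 * (A - 2 * α * x) ≤ |A| ^ 3 / (27 * α ^ 2) := by
  -- `|A|³ - 27 α² x² (|A| - 2 α x) = (|A| - 3 α x)² (|A| + 6 α x)`: the maximum is at `x = |A| / (3 α)`
  have hfac : 0 ≤ (|A| - 3 * α * x) ^ 2 * (|A| + 6 * α * x) :=
    mul_nonneg (sq_nonneg _) (by positivity)
  rw [le_div_iff₀ (by positivity)]
  nlinarith [mul_nonneg (sq_nonneg x) (sub_nonneg.mpr (le_abs_self A))]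

lemma sub_one_mul_le_abs (γ κ : ℝ) (hγ₀ : 0 ≤ γ) (hγ₁ : γ ≤ 1) : (γ - 1) * κ ≤ |κ| := by
  cases abs_cases κ <;> nlinarith

lemma diffusion_le (κ₁ κ₂ η γ x y : ℝ) (hη : 0 ≤ η) (hγ₀ : 0 ≤ γ) (hγ₁ : γ ≤ 1) :
    (γ - 1) * (κ₁ * η ^ 2 * x ^ 2 + κ₂ * y ^ 2) ≤ (|κ₁| * η + |κ₂|) * (η * x ^ 2 + y ^ 2) := by
  have h₁ := mul_le_mul_of_nonneg_right (sub_one_mul_le_abs γ κ₁ hγ₀ hγ₁)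
    (by positivity : 0 ≤ η ^ 2 * x ^ 2)
  have h₂ := mul_le_mul_of_nonneg_right (sub_one_mul_le_abs γ κ₂ hγ₀ hγ₁) (sq_nonneg y)
  nlinarith [mul_nonneg (mul_nonneg (abs_nonneg κ₁) hη) (sq_nonneg y),
    mul_nonneg (mul_nonneg (abs_nonneg κ₂) hη) (sq_nonneg x)]

lemma drift_add_diffusion_le (a₁ a₂ α₁ η κ₁ κ₂ γ c x y : ℝ) (hη : 0 ≤ η) (hα₁ : 0 < α₁)
    (hγ₀ : 0 ≤ γ) (hγ₁ : γ ≤ 1) (hx : 0 ≤ x) (hr : 0 < η * x ^ 2 + y ^ 2)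
    (hc : c ≤ 2 * (η * x - a₂)) :
    2 * η * x * (a₁ * x - α₁ * x ^ 2 + y ^ 2) + 2 * y * (a₂ * y - 2 * η * x * y)
        + 2 * η * κ₁ + 2 * κ₂
        + 4 * (γ - 1) * (κ₁ * η ^ 2 * x ^ 2 + κ₂ * y ^ 2) / (η * x ^ 2 + y ^ 2)
      ≤ -c * (η * x ^ 2 + y ^ 2)
        + (η * |2 * a₁ + c| ^ 3 / (27 * α₁ ^ 2) + 2 * η * κ₁ + 2 * κ₂
          + 4 * (|κ₁| * η + |κ₂|)) := by
  have hcubic := mul_le_mul_of_nonneg_left (sq_mul_sub_le (2 * a₁ + c) α₁ x hα₁ hx) hη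
  have hy := mul_le_mul_of_nonneg_right hc (sq_nonneg y)
  have hdiff : 4 * (γ - 1) * (κ₁ * η ^ 2 * x ^ 2 + κ₂ * y ^ 2) / (η * x ^ 2 + y ^ 2)
      ≤ 4 * (|κ₁| * η + |κ₂|) := by
    rw [div_le_iff₀ hr, mul_assoc 4, mul_assoc 4]
    exact mul_le_mul_of_nonneg_left (diffusion_le κ₁ κ₂ η γ x y hη hγ₀ hγ₁) (by norm_num)
  linear_combination hcubic + hy + hdiff

lemma mul_rpow_sub_one_mul_le {C γ c K r r₀ B : ℝ} (hr₀ : 0 < r₀) (hr : r₀ ≤ r) (hγ : γ ≤ 1)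
    (hCγ : 0 ≤ C * γ) (hB : B ≤ -c * r + K) :
    C * γ * r ^ (γ - 1) * B ≤ -(c * γ) * (C * r ^ γ) + C * γ * |K| * r₀ ^ (γ - 1) := by
  have hr_pos : 0 < r := hr₀.trans_le hr
  have hpow : r ^ (γ - 1) ≤ r₀ ^ (γ - 1) := rpow_le_rpow_of_nonpos hr₀ hr (by linarith)
  have hpow₀ : 0 ≤ r ^ (γ - 1) := (rpow_pos_of_pos hr_pos _).le
  have hK : K * r ^ (γ - 1) ≤ |K| * r₀ ^ (γ - 1) :=
    (mul_le_mul_of_nonneg_right (le_abs_self K) hpow₀).trans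
      (mul_le_mul_of_nonneg_left hpow (abs_nonneg K))
  calc C * γ * r ^ (γ - 1) * B ≤ C * γ * r ^ (γ - 1) * (-c * r + K) :=
        mul_le_mul_of_nonneg_left hB (mul_nonneg hCγ hpow₀)
    _ = -(c * γ) * (C * r ^ γ) + C * γ * (K * r ^ (γ - 1)) := by
        rw [rpow_sub_one hr_pos.ne']; field_simp
    _ ≤ -(c * γ) * (C * r ^ γ) + C * γ * |K| * r₀ ^ (γ - 1) := by
        rw [mul_assoc (C * γ) |K|]; gcongr

lemma mul_sq_half_le_of_mem_U5 {η N : ℝ} {p : ℝ × ℝ} (hη : 0 ≤ η) (hN : 0 ≤ N) (hp : p ∈ U5 N) :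
    η * (N / 2) ^ 2 ≤ η * p.1 ^ 2 + p.2 ^ 2 := by
  have hx : (N / 2) ^ 2 ≤ p.1 ^ 2 := pow_le_pow_left₀ (by positivity) (le_of_lt hp) 2
  nlinarith [sq_nonneg p.2]

lemma exists_Lop_phi5_le (a₁ a₂ α₁ κ₁ κ₂ η N γ C : ℝ) (hα₁ : 0 < α₁) (hη : 0 < η)
    (hN : 2 * |a₂| < η * N) (hγ₀ : 0 < γ) (hγ₁ : γ ≤ 1) (hC : 0 < C) :
    ∃ C' > (0 : ℝ), ∃ D > (0 : ℝ), ∀ p ∈ U5 N,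
      Lop a₁ a₂ α₁ (2 * η) κ₁ κ₂ (phi5 C η γ) p ≤ -C' * phi5 C η γ p + D := by
  have hN₀ : 0 < N := pos_of_mul_pos_right (by linarith [abs_nonneg a₂]) hη.le
  set c := η * N - 2 * |a₂|
  set K := η * |2 * a₁ + c| ^ 3 / (27 * α₁ ^ 2) + 2 * η * κ₁ + 2 * κ₂ + 4 * (|κ₁| * η + |κ₂|)
  set r₀ := η * (N / 2) ^ 2
  have hr₀ : 0 < r₀ := by positivity
  refine ⟨c * γ, mul_pos (by linarith) hγ₀, C * γ * |K| * r₀ ^ (γ - 1) + 1,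
    by positivity, fun ⟨x, y⟩ hp => ?_⟩
  have hx : N / 2 < x := hp
  have hr : r₀ ≤ η * x ^ 2 + y ^ 2 := mul_sq_half_le_of_mem_U5 hη.le hN₀.le hp
  have hc : c ≤ 2 * (η * x - a₂) := by nlinarith [le_abs_self a₂]
  rw [Lop_phi5 _ _ _ _ _ _ _ _ _ _ _ (hr₀.trans_le hr).ne', phi5]
  have hbound := mul_rpow_sub_one_mul_le hr₀ hr hγ₁ (mul_pos hC hγ₀).le
    (drift_add_diffusion_le a₁ a₂ α₁ η κ₁ κ₂ γ c x y hη.le hα₁ hγ₀.le hγ₁ (by linarith) (hr₀.trans_le hr) hc)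
  linarith [hbound]

lemma contDiffAt_phi5 (C η γ : ℝ) {p : ℝ × ℝ} (h : η * p.1 ^ 2 + p.2 ^ 2 ≠ 0) :
    ContDiffAt ℝ (⊤ : ℕ∞) (phi5 C η γ) p :=
  contDiffAt_const.mul (ContDiffAt.rpow_const_of_ne (by fun_prop) h)

lemma sq_norm_le_sq_add_sq (z : ℝ × ℝ) : ‖z‖ ^ 2 ≤ z.1 ^ 2 + z.2 ^ 2 := by
  rw [Prod.norm_def, Real.norm_eq_abs, Real.norm_eq_abs]
  rcases le_total |z.1| |z.2| with h | h
  · rw [max_eq_right h, sq_abs]; nlinarith [sq_nonneg z.1]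
  · rw [max_eq_left h, sq_abs]; nlinarith [sq_nonneg z.2]

lemma phi5_coercive {C η γ : ℝ} (hC : 0 < C) (hη : 0 < η) (hγ : 0 < γ) (M : ℝ) :
    ∃ R, ∀ z : ℝ × ℝ, R < ‖z‖ → M < phi5 C η γ z := by
  set m := min η 1
  have hm : 0 < m := lt_min hη one_pos
  have hlim : Tendsto (fun t : ℝ => C * (m * t ^ 2) ^ γ) atTop atTop :=
    ((tendsto_rpow_atTop hγ).comp
      ((tendsto_pow_atTop two_ne_zero).const_mul_atTop hm)).const_mul_atTop hC
  obtain ⟨R, hR⟩ := eventually_atTop.mp (hlim.eventually_gt_atTop M)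
  refine ⟨R, fun z hz => (hR ‖z‖ hz.le).trans_le ?_⟩
  have hq : m * ‖z‖ ^ 2 ≤ η * z.1 ^ 2 + z.2 ^ 2 := by
    nlinarith [sq_norm_le_sq_add_sq z, min_le_left η 1, min_le_right η 1,
      sq_nonneg z.1, sq_nonneg z.2]
  exact mul_le_mul_of_nonneg_left (rpow_le_rpow (by positivity) hq hγ.le) hC.le

/-- `φ₅` is a Lyapunov function on `U₅`. -/
theorem statement6 (a₁ a₂ α₁ α₂ κ₁ κ₂ η N γ C₅ : ℝ)
    (hα₁ : 0 < α₁) (hα₂ : 0 < α₂) (hη : η = α₂ / 2)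
    (hN : 4 * |a₂| / α₂ < N) (hγ₁ : 0 < γ) (hγ₂ : γ < 1) (hC₅ : 0 < C₅) :
    IsLyapunovOn a₁ a₂ α₁ α₂ κ₁ κ₂ (phi5 C₅ η γ) (U5 N) ∧
      ∃ C₅' > (0:ℝ), ∃ D₅ > (0:ℝ), ∀ p ∈ U5 N,
        Lop a₁ a₂ α₁ α₂ κ₁ κ₂ (phi5 C₅ η γ) p ≤ -C₅' * phi5 C₅ η γ p + D₅ := by
  obtain rfl : α₂ = 2 * η := by rw [hη]; ring
  have hη₀ : 0 < η := by linarith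
  have hN' : 2 * |a₂| < η * N := by rw [div_lt_iff₀ hα₂] at hN; linarith
  have hN₀ : 0 < N := pos_of_mul_pos_right (by linarith [abs_nonneg a₂]) hη₀.le
  have hbound := exists_Lop_phi5_le a₁ a₂ α₁ κ₁ κ₂ η N γ C₅ hα₁ hη₀ hN' hγ₁ hγ₂.le hC₅
  refine ⟨⟨fun p hp => ?_, fun M => ?_, hbound⟩, hbound⟩
  · have hr := (mul_pos hη₀ (by positivity)).trans_le (mul_sq_half_le_of_mem_U5 hη₀.le hN₀.le hp)
    exact (contDiffAt_phi5 C₅ η γ hr.ne').contDiffWithinAt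
  · obtain ⟨R, hR⟩ := phi5_coercive hC₅ hη₀ hγ₁ M
    exact ⟨R, fun z _ => hR z⟩
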